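/- Let N = {u_1, …, u_n}, let g be a non-negative submodular function on N, let ℓ be a non-negative linear function on N, and set f = g + ℓ. Define finitely supported probability distributions μ_0, …, μ_n on pairs of subsets of N as follows: μ_0 is the point mass at (∅, N); μ_i is obtained from μ_{i−1} by, given a pair (X, Y) in its support, setting a = f(X ∪ {u_i}) − f(X) and b = f(Y \ {u_i}) − f(Y), and moving to (X ∪ {u_i}, Y) with probability 1 if b ≤ 0, to (X, Y \ {u_i}) with probability 1 if b > 0 and a ≤ 0, and otherwise to (X ∪ {u_i}, Y) with probability a/(a+b) and to (X, Y \ {u_i}) with probability b/(a+b). Then for every α ∈ [0, 1/2] and every set S ⊆ N, the expectation of f(X) over (X, Y) ∼ μ_n satisfies E[f(X)] ≥ α·g(S) + (1 − α/2)·ℓ(S). -/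

import Mathlib

/-- The transition kernel of one step of the randomized Double Greedy algorithm on
element `u`: given the current pair `q = (X, Y)`, with `a = f (X ∪ {u}) − f X` and
`b = f (Y \ {u}) − f Y`, move to `(X ∪ {u}, Y)` with probability `1` if `b ≤ 0`,
to `(X, Y \ {u})` with probability `1` if `b > 0` and `a ≤ 0`, and otherwise to
`(X ∪ {u}, Y)` with probability `a/(a+b)` and to `(X, Y \ {u})` with probability
`b/(a+b)`. `dgStepProb f u q p` is the probability of moving from `q` to `p`. -/
noncomputable def dgStepProb {α : Type*} [DecidableEq α]
    (f : Finset α → ℝ) (u : α) (q p : Finset α × Finset α) : ℝ :=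
  let a : ℝ := f (q.1 ∪ {u}) - f q.1
  let b : ℝ := f (q.2 \ {u}) - f q.2
  if b ≤ 0 then (if p = (q.1 ∪ {u}, q.2) then 1 else 0)
  else if a ≤ 0 then (if p = (q.1, q.2 \ {u}) then 1 else 0)
  else (if p = (q.1 ∪ {u}, q.2) then a / (a + b) else 0) +
       (if p = (q.1, q.2 \ {u}) then b / (a + b) else 0)

/-!
Two quantities never decrease in expectation along the run: `f Y`, and the potential
`f ((S ∪ X) ∩ Y) + (f X + f Y) / 2`. For the latter, the set `(S ∪ X) ∩ Y` (the `OPT_i` of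
Buchbinder et al.) loses at most a marginal gain `a` or `b` at each step, by diminishing returns,
and with the probabilities `a / (a + b)`, `b / (a + b)` the expected loss is at most
`a b / (a + b) ≤ (a² + b²) / (2 (a + b))`, half the expected gain of `f X + f Y`. At the end `X = Y`, so
`E[f X] ≥ f N ≥ ℓ S` and `2 E[f X] ≥ f S + (f ∅ + f N) / 2 ≥ g S + 3/2 ℓ S`; the combination
with weights `r` and `1 - 2 r` is the claim.
-/

namespace MarkovChain

variable {β : Type*} [Fintype β] {n : ℕ} {μ : ℕ → β → ℝ} {K : Fin n → β → β → ℝ}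

theorem sum_succ_mul (hμ : ∀ i : Fin n, ∀ p, μ (i + 1) p = ∑ q, μ i q * K i q p)
    (i : Fin n) (w : β → ℝ) :
    ∑ p, μ (i + 1) p * w p = ∑ q, μ i q * ∑ p, K i q p * w p := by
  simp only [hμ, Finset.sum_mul, Finset.mul_sum, mul_assoc]
  exact Finset.sum_comm

theorem nonneg (hμ : ∀ i : Fin n, ∀ p, μ (i + 1) p = ∑ q, μ i q * K i q p)
    (h0 : ∀ p, 0 ≤ μ 0 p) (hK : ∀ i q p, 0 ≤ K i q p) :
    ∀ i ≤ n, ∀ p, 0 ≤ μ i p := by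
  intro i
  induction i with
  | zero => exact fun _ => h0
  | succ i ih =>
    intro hi p
    rw [hμ ⟨i, hi⟩]
    exact Finset.sum_nonneg fun q _ => mul_nonneg (ih (by omega) q) (hK _ q p)

theorem support_invariant (G : ℕ → β → Prop)
    (hμ : ∀ i : Fin n, ∀ p, μ (i + 1) p = ∑ q, μ i q * K i q p)
    (h0 : ∀ p, μ 0 p ≠ 0 → G 0 p) (hK : ∀ (i : Fin n) q p, G i q → K i q p ≠ 0 → G (i + 1) p) :
    ∀ i ≤ n, ∀ p, μ i p ≠ 0 → G i p := by
  intro i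
  induction i with
  | zero => exact fun _ => h0
  | succ i ih =>
    intro hi p hp
    rw [hμ ⟨i, hi⟩] at hp
    obtain ⟨q, -, hq⟩ := Finset.exists_ne_zero_of_sum_ne_zero hp
    exact hK ⟨i, hi⟩ q p (ih (by omega) q (left_ne_zero_of_mul hq)) (right_ne_zero_of_mul hq)

theorem sum_mul_le_sum_mul_of_submartingale (Φ : β → ℝ)
    (hμ : ∀ i : Fin n, ∀ p, μ (i + 1) p = ∑ q, μ i q * K i q p)
    (h0 : ∀ p, 0 ≤ μ 0 p) (hK : ∀ i q p, 0 ≤ K i q p)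
    (hΦ : ∀ (i : Fin n) q, μ i q ≠ 0 → Φ q ≤ ∑ p, K i q p * Φ p) :
    ∑ p, μ 0 p * Φ p ≤ ∑ p, μ n p * Φ p := by
  suffices ∀ i ≤ n, ∑ p, μ 0 p * Φ p ≤ ∑ p, μ i p * Φ p from this n le_rfl
  intro i
  induction i with
  | zero => exact fun _ => le_rfl
  | succ i ih =>
    intro hi
    refine (ih (by omega)).trans ?_
    rw [sum_succ_mul hμ ⟨i, hi⟩]
    refine Finset.sum_le_sum fun q _ => ?_
    by_cases hq : μ i q = 0
    · simp [hq]
    · exact mul_le_mul_of_nonneg_left (hΦ ⟨i, hi⟩ q hq) (nonneg hμ h0 hK i (by omega) q)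

end MarkovChain

section Submodular

variable {α : Type*} [DecidableEq α]

def IsSubmodular (f : Finset α → ℝ) : Prop :=
  ∀ S T : Finset α, f (S ∪ T) + f (S ∩ T) ≤ f S + f T

theorem IsSubmodular.add_sum {g : Finset α → ℝ} (hg : IsSubmodular g) (a : α → ℝ) :
    IsSubmodular fun S => g S + ∑ v ∈ S, a v := by
  intro S T
  linarith [hg S T, Finset.sum_union_inter (s₁ := S) (s₂ := T) (f := a)]

theorem IsSubmodular.sub_le_sub {f : Finset α → ℝ} (hf : IsSubmodular f) {A B : Finset α} {u : α}
    (hAB : A ⊆ B) (hu : u ∉ B) : f (B ∪ {u}) - f B ≤ f (A ∪ {u}) - f A := by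
  have h := hf (A ∪ {u}) B
  have hunion : A ∪ {u} ∪ B = B ∪ {u} := by grind
  have hinter : (A ∪ {u}) ∩ B = A := by grind
  rw [hunion, hinter] at h
  linarith

end Submodular

namespace DoubleGreedy

noncomputable def takeProb (a b : ℝ) : ℝ := if b ≤ 0 then 1 else if a ≤ 0 then 0 else a / (a + b)

section TakeProb

variable (a b : ℝ)

theorem takeProb_nonneg : 0 ≤ takeProb a b := by
  unfold takeProb
  split_ifs with hb ha
  · exact zero_le_one
  · exact le_rfl
  · exact div_nonneg (by linarith) (by linarith)

theorem takeProb_le_one : takeProb a b ≤ 1 := by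
  unfold takeProb
  split_ifs with hb ha
  · exact le_rfl
  · exact zero_le_one
  · rw [div_le_one (by linarith)]; linarith

theorem one_sub_takeProb_mul_nonneg : 0 ≤ (1 - takeProb a b) * b := by
  by_cases hb : b ≤ 0
  · simp [takeProb, hb]
  · exact mul_nonneg (sub_nonneg.mpr (takeProb_le_one a b)) (not_le.mp hb).le

variable {a b}

theorem two_mul_one_sub_takeProb_mul_le (hab : 0 ≤ a + b) :
    2 * ((1 - takeProb a b) * a) ≤ takeProb a b * a + (1 - takeProb a b) * b := by
  unfold takeProb
  split_ifs with hb ha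
  · linarith
  · linarith
  · rw [not_le] at hb ha
    field_simp
    nlinarith [sq_nonneg (a - b)]

theorem two_mul_takeProb_mul_le (hab : 0 ≤ a + b) :
    2 * (takeProb a b * b) ≤ takeProb a b * a + (1 - takeProb a b) * b := by
  unfold takeProb
  split_ifs with hb ha
  · linarith
  · linarith
  · rw [not_le] at hb ha
    field_simp
    nlinarith [sq_nonneg (a - b)]

end TakeProb

section Step

variable {α : Type*} [DecidableEq α] (f : Finset α → ℝ) (u : α) (q : Finset α × Finset α)

theorem dgStepProb_eq (p : Finset α × Finset α) :
    dgStepProb f u q p =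
      takeProb (f (q.1 ∪ {u}) - f q.1) (f (q.2 \ {u}) - f q.2) *
          (if p = (q.1 ∪ {u}, q.2) then 1 else 0) +
        (1 - takeProb (f (q.1 ∪ {u}) - f q.1) (f (q.2 \ {u}) - f q.2)) *
          (if p = (q.1, q.2 \ {u}) then 1 else 0) := by
  simp only [dgStepProb, takeProb]
  generalize f (q.1 ∪ {u}) - f q.1 = a, f (q.2 \ {u}) - f q.2 = b
  by_cases hb : b ≤ 0
  · simp [hb]
  by_cases ha : a ≤ 0
  · simp [hb, ha]
  have hdrop : b / (a + b) = 1 - a / (a + b) := by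
    rw [eq_sub_iff_add_eq, ← add_div, add_comm b, div_self]
    linarith [not_le.mp ha, not_le.mp hb]
  simp only [hb, ha, if_false, hdrop]
  split_ifs <;> ring

theorem dgStepProb_nonneg (p : Finset α × Finset α) : 0 ≤ dgStepProb f u q p := by
  have h₀ := takeProb_nonneg (f (q.1 ∪ {u}) - f q.1) (f (q.2 \ {u}) - f q.2)
  have h₁ := takeProb_le_one (f (q.1 ∪ {u}) - f q.1) (f (q.2 \ {u}) - f q.2)
  rw [dgStepProb_eq]
  split_ifs <;> linarith

theorem eq_or_eq_of_dgStepProb_ne_zero {p : Finset α × Finset α} (hp : dgStepProb f u q p ≠ 0) :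
    p = (q.1 ∪ {u}, q.2) ∨ p = (q.1, q.2 \ {u}) := by
  rw [dgStepProb_eq] at hp
  by_contra h
  rw [not_or] at h
  rw [if_neg h.1, if_neg h.2] at hp
  simp at hp

theorem sum_dgStepProb_mul [Fintype α] (w : Finset α × Finset α → ℝ) :
    ∑ p, dgStepProb f u q p * w p =
      takeProb (f (q.1 ∪ {u}) - f q.1) (f (q.2 \ {u}) - f q.2) * w (q.1 ∪ {u}, q.2) +
        (1 - takeProb (f (q.1 ∪ {u}) - f q.1) (f (q.2 \ {u}) - f q.2)) * w (q.1, q.2 \ {u}) := by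
  simp [dgStepProb_eq, add_mul, Finset.sum_add_distrib]

theorem le_sum_dgStepProb_mul_snd [Fintype α] : f q.2 ≤ ∑ p, dgStepProb f u q p * f p.2 := by
  rw [sum_dgStepProb_mul]
  linear_combination one_sub_takeProb_mul_nonneg (f (q.1 ∪ {u}) - f q.1) (f (q.2 \ {u}) - f q.2)

end Step

section Potential

variable {α : Type*} [DecidableEq α] {f : Finset α → ℝ} {u : α}

noncomputable def potential (f : Finset α → ℝ) (S : Finset α) (q : Finset α × Finset α) : ℝ :=
  f ((S ∪ q.1) ∩ q.2) + (f q.1 + f q.2) / 2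

theorem potential_diag (S X : Finset α) : potential f S (X, X) = 2 * f X := by
  simp only [potential, Finset.union_inter_cancel_right]
  ring

theorem potential_le_sum_dgStepProb_mul [Fintype α] (hf : IsSubmodular f) (S : Finset α)
    {X Y : Finset α} (hXY : X ⊆ Y) (huX : u ∉ X) (huY : u ∈ Y) :
    potential f S (X, Y) ≤ ∑ p, dgStepProb f u (X, Y) p * potential f S p := by
  rw [sum_dgStepProb_mul]
  simp only [potential]
  set O := (S ∪ X) ∩ Y
  have hYu : Y \ {u} ∪ {u} = Y := by grind
  have hab : 0 ≤ (f (X ∪ {u}) - f X) + (f (Y \ {u}) - f Y) := by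
    have := hf.sub_le_sub (A := X) (B := Y \ {u}) (u := u) (by grind) (by simp)
    rw [hYu] at this
    linarith
  have hθ := takeProb_le_one (f (X ∪ {u}) - f X) (f (Y \ {u}) - f Y)
  by_cases huS : u ∈ S
  · have htake : (S ∪ (X ∪ {u})) ∩ Y = O := by grind
    have hdrop : (S ∪ X) ∩ (Y \ {u}) = O \ {u} := by grind
    have hloss : f O - f (O \ {u}) ≤ f (X ∪ {u}) - f X := by
      have := hf.sub_le_sub (A := X) (B := O \ {u}) (u := u) (by grind) (by simp)
      rwa [show O \ {u} ∪ {u} = O by grind] at this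
    rw [htake, hdrop]
    have := mul_le_mul_of_nonneg_left hloss (sub_nonneg.mpr hθ)
    linarith [two_mul_one_sub_takeProb_mul_le hab]
  · have htake : (S ∪ (X ∪ {u})) ∩ Y = O ∪ {u} := by grind
    have hdrop : (S ∪ X) ∩ (Y \ {u}) = O := by grind
    have hloss : f O - f (O ∪ {u}) ≤ f (Y \ {u}) - f Y := by
      have := hf.sub_le_sub (A := O) (B := Y \ {u}) (u := u) (by grind) (by simp)
      rw [hYu] at this
      linarith
    rw [htake, hdrop]
    have := mul_le_mul_of_nonneg_left hloss
      (takeProb_nonneg (f (X ∪ {u}) - f X) (f (Y \ {u}) - f Y))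
    linarith [two_mul_takeProb_mul_le hab]

end Potential

section Pending

variable {α : Type*} [Fintype α] {n : ℕ} (e : Fin n ≃ α)

def pending (i : ℕ) : Finset α := Finset.univ.filter fun v => i ≤ (e.symm v : ℕ)

theorem pending_zero : pending e 0 = Finset.univ := by
  simp [pending]

theorem pending_self : pending e n = ∅ := by
  simp [pending, Finset.filter_eq_empty_iff, (e.symm _).isLt]

theorem mem_pending_self (i : Fin n) : e i ∈ pending e i := by
  simp [pending]

theorem pending_succ [DecidableEq α] (i : Fin n) : pending e (i + 1) = pending e i \ {e i} := by
  ext v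
  simp only [pending, Finset.mem_filter, Finset.mem_univ, true_and, Finset.mem_sdiff,
    Finset.mem_singleton, ← e.symm_apply_eq.not, Fin.ext_iff]
  omega

end Pending

section State

variable {α : Type*} [DecidableEq α]

def IsState (R : Finset α) (q : Finset α × Finset α) : Prop :=
  q.1 ⊆ q.2 ∧ q.2 \ q.1 = R

theorem IsState.notMem_fst {R : Finset α} {q : Finset α × Finset α} (h : IsState R q) {u : α}
    (hu : u ∈ R) : u ∉ q.1 := by
  grind [IsState]

theorem IsState.mem_snd {R : Finset α} {q : Finset α × Finset α} (h : IsState R q) {u : α}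
    (hu : u ∈ R) : u ∈ q.2 := by
  grind [IsState]

theorem IsState.snd_eq_fst {q : Finset α × Finset α} (h : IsState ∅ q) : q.2 = q.1 :=
  (Finset.sdiff_eq_empty_iff_subset.mp h.2).antisymm h.1

theorem IsState.step {R : Finset α} {q p : Finset α × Finset α} (h : IsState R q) {u : α}
    (hu : u ∈ R) (f : Finset α → ℝ) (hp : dgStepProb f u q p ≠ 0) : IsState (R \ {u}) p := by
  rcases eq_or_eq_of_dgStepProb_ne_zero f u q hp with rfl | rfl <;> grind [IsState]

end State

section Run

variable {α : Type*} [Fintype α] [DecidableEq α] {n : ℕ} {f : Finset α → ℝ} {e : Fin n ≃ α}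
  {μ : ℕ → Finset α × Finset α → ℝ}

theorem start_le_sum_final_mul
    (hμ0 : ∀ p, μ 0 p = if p = (∅, Finset.univ) then 1 else 0)
    (hμ : ∀ i : Fin n, ∀ p, μ (i + 1) p = ∑ q, μ i q * dgStepProb f (e i) q p)
    (Φ : Finset α × Finset α → ℝ)
    (hΦ : ∀ (i : Fin n) q, IsState (pending e i) q → Φ q ≤ ∑ p, dgStepProb f (e i) q p * Φ p) :
    Φ (∅, Finset.univ) ≤ ∑ p, μ n p * Φ (p.1, p.1) := by
  have h0 : ∀ p, 0 ≤ μ 0 p := fun p => by rw [hμ0]; split_ifs <;> norm_num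
  have hK : ∀ (i : Fin n) q p, 0 ≤ dgStepProb f (e i) q p := fun i => dgStepProb_nonneg f (e i)
  have hstate : ∀ i ≤ n, ∀ q, μ i q ≠ 0 → IsState (pending e i) q := by
    refine MarkovChain.support_invariant _ hμ (fun p hp => ?_) fun i q p hq hp => ?_
    · obtain rfl : p = (∅, Finset.univ) := by by_contra h; simp [hμ0, h] at hp
      simp [IsState, pending_zero]
    · rw [pending_succ]
      exact hq.step (mem_pending_self e i) f hp
  calc Φ (∅, Finset.univ) = ∑ p, μ 0 p * Φ p := by simp [hμ0]
    _ ≤ ∑ p, μ n p * Φ p :=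
      MarkovChain.sum_mul_le_sum_mul_of_submartingale Φ hμ h0 hK fun i q hq =>
        hΦ i q (hstate i i.is_lt.le q hq)
    _ = ∑ p, μ n p * Φ (p.1, p.1) := Finset.sum_congr rfl fun p _ => by
      by_cases hp : μ n p = 0
      · simp [hp]
      · obtain ⟨X, Y⟩ := p
        obtain rfl : Y = X := (pending_self e ▸ hstate n le_rfl _ hp).snd_eq_fst
        rfl

end Run

end DoubleGreedy

open DoubleGreedy in
/-- **Randomized Double Greedy guarantee.**
Let `N = {u 0, …, u (n-1)}` be a finite ground set, `g` a non-negative submodular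
function, `ℓ` a non-negative linear function (with weights `a`), and `f = g + ℓ`.
Let `μ 0` be the point mass at `(∅, N)` and let `μ (i+1)` be obtained from `μ i`
by applying the randomized Double Greedy transition on element `u i`.
Then for every `r ∈ [0, 1/2]` and every `S ⊆ N`, the expectation of `f X` over
`(X, Y) ∼ μ n` is at least `r·g S + (1 − r/2)·ℓ S`. -/
theorem randomized_double_greedy
    {α : Type*} [Fintype α] [DecidableEq α] {n : ℕ}
    (u : Fin n → α) (hu : Function.Bijective u)
    (g : Finset α → ℝ)
    (hg_sub : ∀ S T : Finset α, g (S ∪ T) + g (S ∩ T) ≤ g S + g T)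
    (hg_nonneg : ∀ S : Finset α, 0 ≤ g S)
    (a : α → ℝ) (ha : ∀ v : α, 0 ≤ a v)
    (ℓ : Finset α → ℝ) (hℓ : ∀ S : Finset α, ℓ S = ∑ v ∈ S, a v)
    (f : Finset α → ℝ) (hf : ∀ S : Finset α, f S = g S + ℓ S)
    (μ : ℕ → Finset α × Finset α → ℝ)
    (hμ0 : ∀ p : Finset α × Finset α, μ 0 p = if p = (∅, Finset.univ) then 1 else 0)
    (hμstep : ∀ i : Fin n, ∀ p : Finset α × Finset α,
      μ (i.val + 1) p = ∑ q : Finset α × Finset α, μ i.val q * dgStepProb f (u i) q p)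
    (r : ℝ) (hr0 : 0 ≤ r) (hr1 : r ≤ 1 / 2) (S : Finset α) :
    (∑ p : Finset α × Finset α, μ n p * f p.1) ≥ r * g S + (1 - r / 2) * ℓ S := by
  set e := Equiv.ofBijective u hu
  have hsub : IsSubmodular f := by
    convert IsSubmodular.add_sum hg_sub a using 1
    ext S
    rw [hf, hℓ]
  have hY : f Finset.univ ≤ ∑ p, μ n p * f p.1 :=
    start_le_sum_final_mul (e := e) hμ0 hμstep (fun q => f q.2)
      fun i q _ => le_sum_dgStepProb_mul_snd f (e i) q
  have hpot := start_le_sum_final_mul (e := e) hμ0 hμstep (potential f S)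
      fun i q hq => potential_le_sum_dgStepProb_mul hsub S hq.1
        (hq.notMem_fst (mem_pending_self e i)) (hq.mem_snd (mem_pending_self e i))
  simp only [potential_diag] at hpot
  simp only [potential, Finset.union_empty, Finset.inter_univ] at hpot
  set E := ∑ p, μ n p * f p.1
  have hE_double : ∑ p, μ n p * (2 * f p.1) = 2 * E := by
    rw [Finset.mul_sum]
    exact Finset.sum_congr rfl fun p _ => by ring
  have hf_empty : 0 ≤ f ∅ := by simpa [hf, hℓ] using hg_nonneg ∅
  have hℓ_le : ℓ S ≤ ℓ Finset.univ := by
    simpa only [hℓ] using Finset.sum_le_sum_of_subset_of_nonneg S.subset_univ fun v _ _ => ha v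
  have hE_ℓ : ℓ S ≤ E := by linarith [hf Finset.univ, hg_nonneg Finset.univ]
  have hE_gℓ : g S + 3 / 2 * ℓ S ≤ 2 * E := by
    linarith [hf S, hf Finset.univ, hg_nonneg Finset.univ]
  linarith [mul_le_mul_of_nonneg_left hE_gℓ hr0,
    mul_le_mul_of_nonneg_left hE_ℓ (by linarith : 0 ≤ 1 - 2 * r)]
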